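/- arXiv:1907.11126 — 2 statements merged into one kernel-verified Lean document; each statement's English description precedes it below -/
import Mathlib

section
/- (Face concentration bound, Sedan flux.) Let c_K, c_L ∈ (0,1) and Φ_K, Φ_L ∈ ℝ, and define the Sedan flux F = B((Φ_L + ν(c_L)) - (Φ_K + ν(c_K)))·c_K - B((Φ_K + ν(c_K)) - (Φ_L + ν(c_L)))·c_L. If h(c_K) + Φ_K ≠ h(c_L) + Φ_L, then the face concentration C = F / (h(c_K) + Φ_K - h(c_L) - Φ_L) satisfies min(c_K, c_L) ≤ C ≤ max(c_K, c_L). -/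
/-- The Bernoulli function `B(u) = u / (exp u - 1)` for `u ≠ 0`, extended by `B 0 = 1`. -/
noncomputable def bernoulliB (u : ℝ) : ℝ := if u = 0 then 1 else u / (Real.exp u - 1)

/-- The chemical potential `h(c) = log (c / (1-c))`. -/
noncomputable def hF (c : ℝ) : ℝ := Real.log (c / (1 - c))

/-- The excess chemical potential `ν(c) = -log(1-c)`. -/
noncomputable def nuF (c : ℝ) : ℝ := - Real.log (1 - c)

/-- `g(t) = (exp t - 1)/t`, extended by `g 0 = 1`. -/
noncomputable def gF (t : ℝ) : ℝ := if t = 0 then 1 else (Real.exp t - 1) / t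

lemma gF_pos (t : ℝ) : 0 < gF t := by
  unfold gF
  rcases lt_trichotomy t 0 with ht | rfl | ht
  · rw [if_neg ht.ne]
    apply div_pos_of_neg_of_neg _ ht
    simpa using Real.exp_lt_one_iff.mpr ht
  · simp
  · rw [if_neg ht.ne']
    apply div_pos _ ht
    have := Real.add_one_le_exp t
    linarith

lemma gF_mono : Monotone gF := by
  intro s t hst
  unfold gF
  rcases eq_or_ne s 0 with rfl | hs
  · rw [if_pos rfl]
    rcases eq_or_ne t 0 with rfl | ht
    · simp
    · have ht' : 0 < t := lt_of_le_of_ne hst (Ne.symm ht)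
      rw [if_neg ht, le_div_iff₀ ht']
      have := Real.add_one_le_exp t
      linarith
  · rw [if_neg hs]
    rcases eq_or_ne t 0 with rfl | ht
    · have hs' : s < 0 := lt_of_le_of_ne hst hs
      rw [if_pos rfl, div_le_iff_of_neg hs']
      have := Real.add_one_le_exp s
      linarith
    · rw [if_neg ht]
      have := convexOn_exp.secant_mono (a := 0) (x := s) (y := t)
        (Set.mem_univ _) (Set.mem_univ _) (Set.mem_univ _) hs ht hst
      simpa using this

lemma gF_symm (a b : ℝ) : Real.exp a * gF (b - a) = Real.exp b * gF (a - b) := by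
  rcases eq_or_ne a b with rfl | h
  · simp
  · unfold gF
    rw [if_neg (sub_ne_zero.mpr (Ne.symm h)), if_neg (sub_ne_zero.mpr h),
      Real.exp_sub, Real.exp_sub]
    have ha := Real.exp_ne_zero a
    have hb := Real.exp_ne_zero b
    have hab : a - b ≠ 0 := sub_ne_zero.mpr h
    have hba : b - a ≠ 0 := sub_ne_zero.mpr (Ne.symm h)
    field_simp
    ring

lemma exp_sub_one_ne (u : ℝ) (hu : u ≠ 0) : Real.exp u - 1 ≠ 0 := by
  rcases lt_or_gt_of_ne hu with h | h
  · have := Real.exp_lt_one_iff.mpr h; linarith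
  · have := Real.add_one_le_exp u; linarith

lemma bernoulliB_eq (u : ℝ) : bernoulliB u = 1 / gF u := by
  unfold bernoulliB gF
  rcases eq_or_ne u 0 with rfl | hu
  · simp
  · rw [if_neg hu, if_neg hu, one_div_div]

lemma bernoulliB_neg (u : ℝ) : bernoulliB (-u) = Real.exp u * bernoulliB u := by
  unfold bernoulliB
  rcases eq_or_ne u 0 with rfl | hu
  · simp
  · rw [if_neg hu, if_neg (neg_ne_zero.mpr hu), Real.exp_neg]
    have h1 := exp_sub_one_ne u hu
    have h2 := Real.exp_ne_zero u
    have h3 : (Real.exp u)⁻¹ - 1 ≠ 0 := by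
      intro h
      apply exp_sub_one_ne (-u) (neg_ne_zero.mpr hu)
      rw [Real.exp_neg]; exact h
    have h4 : 1 - Real.exp u ≠ 0 := fun h => h1 (by linarith)
    field_simp
    ring

theorem sedan_face_concentration_bounds (cK cL ΦK ΦL : ℝ)
    (hK : cK ∈ Set.Ioo (0 : ℝ) 1) (hL : cL ∈ Set.Ioo (0 : ℝ) 1)
    (hne : hF cK + ΦK ≠ hF cL + ΦL) :
    min cK cL ≤
        (bernoulliB ((ΦL + nuF cL) - (ΦK + nuF cK)) * cK
          - bernoulliB ((ΦK + nuF cK) - (ΦL + nuF cL)) * cL)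
        / (hF cK + ΦK - hF cL - ΦL) ∧
    (bernoulliB ((ΦL + nuF cL) - (ΦK + nuF cK)) * cK
          - bernoulliB ((ΦK + nuF cK) - (ΦL + nuF cL)) * cL)
        / (hF cK + ΦK - hF cL - ΦL) ≤ max cK cL := by
  obtain ⟨hK0, hK1⟩ := hK
  obtain ⟨hL0, hL1⟩ := hL
  set x := Real.log cK with hxdef
  set y := Real.log cL with hydef
  set u := (ΦL + nuF cL) - (ΦK + nuF cK) with hudef
  set d := hF cK + ΦK - hF cL - ΦL with hddef
  have hcK : Real.exp x = cK := Real.exp_log hK0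
  have hcL : Real.exp y = cL := Real.exp_log hL0
  have hhK : hF cK = x + nuF cK := by
    rw [hF, nuF, Real.log_div hK0.ne' (by linarith : (1:ℝ) - cK ≠ 0)]
    ring
  have hhL : hF cL = y + nuF cL := by
    rw [hF, nuF, Real.log_div hL0.ne' (by linarith : (1:ℝ) - cL ≠ 0)]
    ring
  have hd : d = x - (u + y) := by rw [hddef, hhK, hhL, hudef]; ring
  have hdne : d ≠ 0 := by
    intro h
    apply hne
    have : hF cK + ΦK - hF cL - ΦL = 0 := h
    linarith
  have hmu : (ΦK + nuF cK) - (ΦL + nuF cL) = -u := by rw [hudef]; ring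
  have hgu := gF_pos u
  have hx : Real.exp x = Real.exp d * Real.exp (u + y) := by
    rw [← Real.exp_add]
    congr 1
    rw [hd]; ring
  have hnum : bernoulliB u * cK - bernoulliB (-u) * cL
      = Real.exp (u + y) * (Real.exp d - 1) / gF u := by
    rw [bernoulliB_neg, bernoulliB_eq, ← hcK, ← hcL, hx, Real.exp_add]
    field_simp
  have hC : (bernoulliB u * cK - bernoulliB (-u) * cL) / d
      = Real.exp (u + y) * gF d / gF u := by
    rw [hnum]
    unfold gF
    rw [if_neg hdne]
    field_simp
  rw [hmu, hC]
  have key : ∀ z : ℝ, z ≤ x → z ≤ y →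
      Real.exp z * gF u ≤ Real.exp (u + y) * gF d := by
    intro z hzx hzy
    calc Real.exp z * gF u
        = Real.exp z * gF ((z + u) - z) := by ring_nf
      _ ≤ Real.exp z * gF ((y + u) - z) := by
          apply mul_le_mul_of_nonneg_left (gF_mono (by linarith)) (Real.exp_nonneg z)
      _ = Real.exp (y + u) * gF (z - (y + u)) := gF_symm z (y + u)
      _ ≤ Real.exp (y + u) * gF (x - (y + u)) := by
          apply mul_le_mul_of_nonneg_left (gF_mono (by linarith)) (Real.exp_nonneg _)
      _ = Real.exp (u + y) * gF d := by rw [hd, add_comm y u]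
  have key2 : ∀ z : ℝ, x ≤ z → y ≤ z →
      Real.exp (u + y) * gF d ≤ Real.exp z * gF u := by
    intro z hzx hzy
    calc Real.exp (u + y) * gF d
        = Real.exp (y + u) * gF (x - (y + u)) := by rw [hd, add_comm y u]
      _ ≤ Real.exp (y + u) * gF (z - (y + u)) := by
          apply mul_le_mul_of_nonneg_left (gF_mono (by linarith)) (Real.exp_nonneg _)
      _ = Real.exp z * gF ((y + u) - z) := gF_symm (y + u) z
      _ ≤ Real.exp z * gF ((z + u) - z) := by
          apply mul_le_mul_of_nonneg_left (gF_mono (by linarith)) (Real.exp_nonneg _)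
      _ = Real.exp z * gF u := by ring_nf
  constructor
  · have hmin : min cK cL = Real.exp (min x y) := by
      rw [← hcK, ← hcL, Real.exp_monotone.map_min]
    rw [hmin, le_div_iff₀ hgu]
    exact key (min x y) (min_le_left x y) (min_le_right x y)
  · have hmax : max cK cL = Real.exp (max x y) := by
      rw [← hcK, ← hcL, Real.exp_monotone.map_max]
    rw [hmax, div_le_iff₀ hgu]
    exact key2 (max x y) (le_max_left x y) (le_max_right x y)
end

section
/- (Coercivity of the face dissipation, centered scheme.) Fix δ ∈ (0,1) and M > 0. For c_K, c_L ∈ (0,1) and Φ_K, Φ_L ∈ ℝ, define the centered dissipation D(c_K, c_L, Φ_K, Φ_L) = ((c_K + c_L)/2)·|h(c_K) - h(c_L) + Φ_K - Φ_L|², where h(c) = log(c/(1-c)). Then Ψ_{δ,M}(c_L) = inf{ D(c_K, c_L, Φ_K, Φ_L) : c_K ∈ [δ, 1), Φ_K, Φ_L ∈ [-M, M] } tends to +∞ as c_L → 0⁺, and Υ_{δ,M}(c_L) = inf{ D(c_K, c_L, Φ_K, Φ_L) : c_K ∈ (0, 1-δ], Φ_K, Φ_L ∈ [-M, M] } tends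 to +∞ as c_L → 1⁻. -/
open Filter

/-- The face dissipation of the centered scheme. -/
noncomputable def Dcent (cK cL ΦK ΦL : ℝ) : ℝ :=
  ((cK + cL) / 2) * |hF cK - hF cL + ΦK - ΦL| ^ 2

lemma hF_mono {a b : ℝ} (ha : 0 < a) (hab : a ≤ b) (hb : b < 1) : hF a ≤ hF b := by
  have h1a : 0 < 1 - a := by linarith
  have h1b : 0 < 1 - b := by linarith
  have : a / (1 - a) ≤ b / (1 - b) := by
    rw [div_le_div_iff₀ h1a h1b]; nlinarith
  exact Real.log_le_log (by positivity) this

lemma hF_eq {c : ℝ} (hc : c ∈ Set.Ioo (0:ℝ) 1) :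
    hF c = Real.log c - Real.log (1 - c) :=
  Real.log_div (ne_of_gt hc.1) (by have := hc.2; intro h; linarith)

lemma hF_atBot : Tendsto hF (nhdsWithin (0:ℝ) (Set.Ioo 0 1)) atBot := by
  have h1 : Tendsto (fun c : ℝ => Real.log c) (nhdsWithin (0:ℝ) (Set.Ioo 0 1)) atBot :=
    Real.tendsto_log_nhdsGT_zero.mono_left
      (nhdsWithin_mono _ (fun x hx => hx.1))
  have h2 : Tendsto (fun c : ℝ => -Real.log (1 - c)) (nhdsWithin (0:ℝ) (Set.Ioo 0 1)) (nhds 0) := by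
    have hcont : ContinuousAt (fun c : ℝ => -Real.log (1 - c)) 0 := by
      apply ContinuousAt.neg
      exact (Real.continuousAt_log (by norm_num)).comp (by fun_prop)
    have := hcont.tendsto
    simp only [sub_zero, Real.log_one, neg_zero] at this
    exact this.mono_left nhdsWithin_le_nhds
  have h3 := h1.atBot_add h2
  refine h3.congr' ?_
  filter_upwards [self_mem_nhdsWithin] with c hc
  rw [hF_eq hc]; ring

lemma hF_atTop : Tendsto hF (nhdsWithin (1:ℝ) (Set.Ioo 0 1)) atTop := by
  have h1 : Tendsto (fun c : ℝ => -Real.log (1 - c)) (nhdsWithin (1:ℝ) (Set.Ioo 0 1)) atTop := by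
    have hsub : Tendsto (fun c : ℝ => 1 - c) (nhdsWithin (1:ℝ) (Set.Ioo 0 1))
        (nhdsWithin (0:ℝ) (Set.Ioi 0)) := by
      rw [tendsto_nhdsWithin_iff]
      constructor
      · have h0 : Tendsto (fun c : ℝ => 1 - c) (nhds (1:ℝ)) (nhds ((1:ℝ) - 1)) :=
          ((continuous_const.sub continuous_id).tendsto (1:ℝ) : _)
        simp only [sub_self] at h0
        exact h0.mono_left nhdsWithin_le_nhds
      · filter_upwards [self_mem_nhdsWithin] with c hc
        exact sub_pos.mpr hc.2
    exact tendsto_neg_atBot_atTop.comp (Real.tendsto_log_nhdsGT_zero.comp hsub)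
  have h2 : Tendsto (fun c : ℝ => Real.log c) (nhdsWithin (1:ℝ) (Set.Ioo 0 1)) (nhds 0) := by
    have hcont : ContinuousAt (fun c : ℝ => Real.log c) 1 := Real.continuousAt_log (by norm_num)
    have := hcont.tendsto
    simp only [Real.log_one] at this
    exact this.mono_left nhdsWithin_le_nhds
  have h3 := h1.atTop_add h2
  refine h3.congr' ?_
  filter_upwards [self_mem_nhdsWithin] with c hc
  rw [hF_eq hc]; ring

theorem centered_dissipation_coercive (δ M : ℝ)
    (hδ : δ ∈ Set.Ioo (0 : ℝ) 1) (hM : 0 < M) :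
    Tendsto (fun cL : ℝ =>
        sInf { d : ℝ | ∃ cK ∈ Set.Ico δ (1 : ℝ), ∃ ΦK ∈ Set.Icc (-M) M,
          ∃ ΦL ∈ Set.Icc (-M) M, d = Dcent cK cL ΦK ΦL })
      (nhdsWithin 0 (Set.Ioo (0 : ℝ) 1)) atTop ∧
    Tendsto (fun cL : ℝ =>
        sInf { d : ℝ | ∃ cK ∈ Set.Ioc (0 : ℝ) (1 - δ), ∃ ΦK ∈ Set.Icc (-M) M,
          ∃ ΦL ∈ Set.Icc (-M) M, d = Dcent cK cL ΦK ΦL })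
      (nhdsWithin 1 (Set.Ioo (0 : ℝ) 1)) atTop := by
  obtain ⟨hδ0, hδ1⟩ := hδ
  constructor
  · rw [tendsto_atTop]
    intro A
    set t := Real.sqrt (2 * max A 0 / δ) with ht
    have ht0 : 0 ≤ t := Real.sqrt_nonneg _
    have ht2 : t ^ 2 = 2 * max A 0 / δ := Real.sq_sqrt (by positivity)
    filter_upwards [self_mem_nhdsWithin,
      hF_atBot.eventually (eventually_le_atBot (hF δ - 2 * M - t))] with cL hcL hhf
    apply le_csInf
    · exact ⟨Dcent δ cL 0 0, δ, ⟨le_refl δ, hδ1⟩, 0, ⟨by linarith, by linarith⟩,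
        0, ⟨by linarith, by linarith⟩, rfl⟩
    · rintro d ⟨cK, ⟨hcK1, hcK2⟩, ΦK, ⟨hΦK1, hΦK2⟩, ΦL, ⟨hΦL1, hΦL2⟩, rfl⟩
      have hhK : hF δ ≤ hF cK := hF_mono hδ0 hcK1 hcK2
      have hE : t ≤ hF cK - hF cL + ΦK - ΦL := by linarith
      have habs : t ≤ |hF cK - hF cL + ΦK - ΦL| := le_trans hE (le_abs_self _)
      have hsq : t ^ 2 ≤ |hF cK - hF cL + ΦK - ΦL| ^ 2 := by
        apply pow_le_pow_left₀ ht0 habs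
      have hpre : δ / 2 ≤ (cK + cL) / 2 := by
        have := hcL.1; linarith
      have : A ≤ δ / 2 * t ^ 2 := by
        rw [ht2]
        have : δ / 2 * (2 * max A 0 / δ) = max A 0 := by field_simp
        rw [this]; exact le_max_left _ _
      calc A ≤ δ / 2 * t ^ 2 := this
        _ ≤ ((cK + cL) / 2) * |hF cK - hF cL + ΦK - ΦL| ^ 2 := by
            apply mul_le_mul hpre hsq (by positivity) (by linarith [hcL.1])
        _ = Dcent cK cL ΦK ΦL := rfl
  · rw [tendsto_atTop]
    intro A
    set t := Real.sqrt (4 * max A 0) with ht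
    have ht0 : 0 ≤ t := Real.sqrt_nonneg _
    have ht2 : t ^ 2 = 4 * max A 0 := Real.sq_sqrt (by positivity)
    have hev : ∀ᶠ cL in nhdsWithin (1:ℝ) (Set.Ioo 0 1), (1:ℝ)/2 < cL :=
      ((eventually_gt_nhds (by norm_num : (1:ℝ)/2 < 1)).filter_mono nhdsWithin_le_nhds)
    filter_upwards [self_mem_nhdsWithin, hev,
      hF_atTop.eventually (eventually_ge_atTop (hF (1 - δ) + 2 * M + t))] with cL hcL hhalf hhf
    apply le_csInf
    · exact ⟨Dcent (1 - δ) cL 0 0, 1 - δ, ⟨by linarith, le_refl _⟩, 0,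
        ⟨by linarith, by linarith⟩, 0, ⟨by linarith, by linarith⟩, rfl⟩
    · rintro d ⟨cK, ⟨hcK1, hcK2⟩, ΦK, ⟨hΦK1, hΦK2⟩, ΦL, ⟨hΦL1, hΦL2⟩, rfl⟩
      have hhK : hF cK ≤ hF (1 - δ) := hF_mono hcK1 hcK2 (by linarith)
      have hE : hF cK - hF cL + ΦK - ΦL ≤ -t := by linarith
      have habs : t ≤ |hF cK - hF cL + ΦK - ΦL| := by
        have h' : t ≤ -(hF cK - hF cL + ΦK - ΦL) := by linarith
        exact h'.trans (neg_le_abs _)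
      have hsq : t ^ 2 ≤ |hF cK - hF cL + ΦK - ΦL| ^ 2 := pow_le_pow_left₀ ht0 habs 2
      have hpre : (1:ℝ) / 4 ≤ (cK + cL) / 2 := by linarith
      have hA : A ≤ (1:ℝ) / 4 * t ^ 2 := by
        rw [ht2]
        have : (1:ℝ) / 4 * (4 * max A 0) = max A 0 := by ring
        rw [this]; exact le_max_left _ _
      calc A ≤ (1:ℝ) / 4 * t ^ 2 := hA
        _ ≤ ((cK + cL) / 2) * |hF cK - hF cL + ΦK - ΦL| ^ 2 := by
            apply mul_le_mul hpre hsq (by positivity) (by linarith)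
        _ = Dcent cK cL ΦK ΦL := rfl
end
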